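/- Let G be a bipartite graph on vertex set X ⊔ Y. Then: (i) G is row-nested if and only if G has no vertex-induced subgraph G_{X'⊔Y'} isomorphic to two disjoint edges; (ii) G is nearly row-nested if and only if G has no vertex-induced subgraph isomorphic to a 6-cycle and none isomorphic to the disjoint union of an edge with a two-edge path whose both endpoints lie in Y; (iii) G is horizontal if and only if G has no vertex-induced subgraph isomorphic to a two-edge path whose both endpoints lie in X; (iv) G is horizontal-vertical if and only if G has no vertex-induced subgraph isomorphic to a three-edge path and none isomorphic to a 4-cycle. -/

import Mathlib

open scoped Classical

noncomputable section

namespace BipartiteGraphs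

variable {A B : Type}

/-- The row `R_x` of the vertex `x ∈ X` in a bipartite graph `G` on `X ⊔ Y`:
its set of neighbours in `Y`. -/
def row (G : SimpleGraph (A ⊕ B)) (a : A) : Set B := {b | G.Adj (Sum.inl a) (Sum.inr b)}

/-- `G` is bipartite with respect to `A ⊔ B`: every edge goes between the two parts. -/
def IsBip (G : SimpleGraph (A ⊕ B)) : Prop :=
  (∀ a a' : A, ¬ G.Adj (Sum.inl a) (Sum.inl a')) ∧
  (∀ b b' : B, ¬ G.Adj (Sum.inr b) (Sum.inr b'))

/-- `G` is row-nested:  the rows are totally ordered under inclusion. -/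
def RowNested (G : SimpleGraph (A ⊕ B)) : Prop :=
  ∀ a a' : A, row G a ⊆ row G a' ∨ row G a' ⊆ row G a

/-- `G` is nearly row-nested:  rows of different cardinalities are nested, and for each
cardinality `c`, (whenever a row of cardinality `c` exists) the intersection of the rows
of cardinality `c` has cardinality `c - 1` or `c`. -/
def NearlyRowNested (G : SimpleGraph (A ⊕ B)) : Prop :=
  (∀ a a' : A, (row G a).ncard < (row G a').ncard → row G a ⊂ row G a') ∧
  (∀ c : ℕ, {a : A | (row G a).ncard = c}.Nonempty →
    ((⋂ a ∈ {a : A | (row G a).ncard = c}, row G a).ncard = c - 1 ∨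
     (⋂ a ∈ {a : A | (row G a).ncard = c}, row G a).ncard = c))

/-- `G` is horizontal:  every cell of its diagram is alone within its column. -/
def Horizontal (G : SimpleGraph (A ⊕ B)) : Prop :=
  ∀ (a a' : A) (b : B), G.Adj (Sum.inl a) (Sum.inr b) → G.Adj (Sum.inl a') (Sum.inr b) →
    a = a'

/-- `G` is horizontal-vertical:  every cell of its diagram is alone within its column or
alone within its row (or both). -/
def HorizontalVertical (G : SimpleGraph (A ⊕ B)) : Prop :=
  ∀ (a : A) (b : B), G.Adj (Sum.inl a) (Sum.inr b) →
    ((∀ a' : A, G.Adj (Sum.inl a') (Sum.inr b) → a' = a) ∨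
     (∀ b' : B, G.Adj (Sum.inl a) (Sum.inr b') → b' = b))

/-- `G` has a vertex-induced subgraph isomorphic to two disjoint edges. -/
def HasTwoDisjointEdges (G : SimpleGraph (A ⊕ B)) : Prop :=
  ∃ (a₁ a₂ : A) (b₁ b₂ : B), a₁ ≠ a₂ ∧ b₁ ≠ b₂ ∧
    G.Adj (Sum.inl a₁) (Sum.inr b₁) ∧ G.Adj (Sum.inl a₂) (Sum.inr b₂) ∧
    ¬ G.Adj (Sum.inl a₁) (Sum.inr b₂) ∧ ¬ G.Adj (Sum.inl a₂) (Sum.inr b₁)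

/-- `G` has a vertex-induced subgraph isomorphic to a `6`-cycle. -/
def HasInducedSixCycle (G : SimpleGraph (A ⊕ B)) : Prop :=
  ∃ (a₁ a₂ a₃ : A) (b₁ b₂ b₃ : B),
    a₁ ≠ a₂ ∧ a₁ ≠ a₃ ∧ a₂ ≠ a₃ ∧ b₁ ≠ b₂ ∧ b₁ ≠ b₃ ∧ b₂ ≠ b₃ ∧
    G.Adj (Sum.inl a₁) (Sum.inr b₁) ∧ G.Adj (Sum.inl a₁) (Sum.inr b₃) ∧
    G.Adj (Sum.inl a₂) (Sum.inr b₁) ∧ G.Adj (Sum.inl a₂) (Sum.inr b₂) ∧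
    G.Adj (Sum.inl a₃) (Sum.inr b₂) ∧ G.Adj (Sum.inl a₃) (Sum.inr b₃) ∧
    ¬ G.Adj (Sum.inl a₁) (Sum.inr b₂) ∧ ¬ G.Adj (Sum.inl a₂) (Sum.inr b₃) ∧
    ¬ G.Adj (Sum.inl a₃) (Sum.inr b₁)

/-- `G` has a vertex-induced subgraph isomorphic to the disjoint union of an edge with a
two-edge path whose endpoints both lie in `Y`. -/
def HasEdgePlusCherryY (G : SimpleGraph (A ⊕ B)) : Prop :=
  ∃ (a₁ a₂ : A) (b₁ b₂ b₃ : B), a₁ ≠ a₂ ∧ b₁ ≠ b₂ ∧ b₁ ≠ b₃ ∧ b₂ ≠ b₃ ∧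
    G.Adj (Sum.inl a₁) (Sum.inr b₁) ∧
    G.Adj (Sum.inl a₂) (Sum.inr b₂) ∧ G.Adj (Sum.inl a₂) (Sum.inr b₃) ∧
    ¬ G.Adj (Sum.inl a₁) (Sum.inr b₂) ∧ ¬ G.Adj (Sum.inl a₁) (Sum.inr b₃) ∧
    ¬ G.Adj (Sum.inl a₂) (Sum.inr b₁)

/-- `G` has a vertex-induced subgraph isomorphic to a two-edge path whose endpoints both
lie in `X`. -/
def HasCherryX (G : SimpleGraph (A ⊕ B)) : Prop :=
  ∃ (a₁ a₂ : A) (b : B), a₁ ≠ a₂ ∧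
    G.Adj (Sum.inl a₁) (Sum.inr b) ∧ G.Adj (Sum.inl a₂) (Sum.inr b)

/-- `G` has a vertex-induced subgraph isomorphic to a three-edge path. -/
def HasInducedP4 (G : SimpleGraph (A ⊕ B)) : Prop :=
  ∃ (a₁ a₂ : A) (b₁ b₂ : B), a₁ ≠ a₂ ∧ b₁ ≠ b₂ ∧
    G.Adj (Sum.inl a₁) (Sum.inr b₁) ∧ G.Adj (Sum.inl a₂) (Sum.inr b₁) ∧
    G.Adj (Sum.inl a₂) (Sum.inr b₂) ∧ ¬ G.Adj (Sum.inl a₁) (Sum.inr b₂)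

/-- `G` has a vertex-induced subgraph isomorphic to a `4`-cycle. -/
def HasFourCycle (G : SimpleGraph (A ⊕ B)) : Prop :=
  ∃ (a₁ a₂ : A) (b₁ b₂ : B), a₁ ≠ a₂ ∧ b₁ ≠ b₂ ∧
    G.Adj (Sum.inl a₁) (Sum.inr b₁) ∧ G.Adj (Sum.inl a₂) (Sum.inr b₁) ∧
    G.Adj (Sum.inl a₂) (Sum.inr b₂) ∧ G.Adj (Sum.inl a₁) (Sum.inr b₂)

/-!
Parts (i), (iii) and (iv) only unfold definitions: two incomparable rows give two disjoint
edges, two cells in a column give the cherry, and a cell sharing its column and its row yields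
a `P₄` or a `C₄` according to whether the opposite corner is a cell.

For (ii) the key fact is that without an edge-plus-cherry, a row `R` that has a cell outside
a row `R'` forces `|R' \ R| ≤ 1`. Hence rows of different sizes are nested, and rows of equal
size differ in at most one cell each. If the rows of size `c` have intersection of size at most
`c - 2`, choose two different rows `R₁, R₂` of size `c`, a cell `b₁ ∈ R₁ ∩ R₂` outside some row
`R₃` of size `c`, and `b₃ ∈ R₁ \ R₂`, `b₂ ∈ R₂ \ R₁`. As `R₁ \ R₃` and `R₂ \ R₃` are `{b₁}`,
both `b₂` and `b₃` lie in `R₃`, and the six vertices span an induced `C₆`. Conversely, `C₆` and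
the edge-plus-cherry each exhibit rows of equal size `c` with two cells outside the
intersection of all rows of size `c`.
-/

end BipartiteGraphs

namespace Set

variable {α : Type*} [Finite α] {s t : Set α} {x y : α}

lemma ncard_add_two_le_of_mem_sdiff (hst : s ⊆ t) (hx : x ∈ t \ s) (hy : y ∈ t \ s)
    (hxy : x ≠ y) : s.ncard + 2 ≤ t.ncard := by
  have htwo : 1 < (t \ s).ncard := (one_lt_ncard_iff).2 ⟨x, y, hx, hy, hxy⟩
  have := ncard_sdiff_add_ncard_of_subset hst
  omega

lemma mem_of_ncard_sdiff_le_one (h : (s \ t).ncard ≤ 1) (hx : x ∈ s \ t) (hy : y ∈ s)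
    (hyx : y ≠ x) : y ∈ t := by
  by_contra hyt
  exact hyx ((ncard_le_one).1 h y ⟨hy, hyt⟩ x hx)

end Set

namespace BipartiteGraphs

variable {A B : Type} {G : SimpleGraph (A ⊕ B)}

lemma rowNested_iff_not_hasTwoDisjointEdges : RowNested G ↔ ¬ HasTwoDisjointEdges G := by
  constructor
  · rintro h ⟨a₁, a₂, b₁, b₂, -, -, h₁₁, h₂₂, h₁₂, h₂₁⟩
    rcases h a₁ a₂ with hs | hs
    · exact h₂₁ (hs h₁₁)
    · exact h₁₂ (hs h₂₂)
  · intro h a a'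
    by_contra! hc
    obtain ⟨b₁, hb₁, hb₁'⟩ := Set.not_subset.mp hc.1
    obtain ⟨b₂, hb₂, hb₂'⟩ := Set.not_subset.mp hc.2
    exact h ⟨a, a', b₁, b₂, by rintro rfl; exact hb₁' hb₁, by rintro rfl; exact hb₂' hb₁,
      hb₁, hb₂, hb₂', hb₁'⟩

lemma horizontal_iff_not_hasCherryX : Horizontal G ↔ ¬ HasCherryX G :=
  ⟨fun h ⟨a₁, a₂, b, hne, h₁, h₂⟩ ↦ hne (h a₁ a₂ b h₁ h₂),
    fun h a a' b h₁ h₂ ↦ by_contra fun hne ↦ h ⟨a, a', b, hne, h₁, h₂⟩⟩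

lemma horizontalVertical_iff :
    HorizontalVertical G ↔ ¬ HasInducedP4 G ∧ ¬ HasFourCycle G := by
  constructor
  · intro h
    have hcell : ∀ {a₁ a₂ : A} {b₁ b₂ : B}, a₁ ≠ a₂ → b₁ ≠ b₂ → G.Adj (Sum.inl a₁) (Sum.inr b₁) →
        G.Adj (Sum.inl a₂) (Sum.inr b₁) → G.Adj (Sum.inl a₂) (Sum.inr b₂) → False := by
      intro a₁ a₂ b₁ b₂ ha hb e₁₁ e₂₁ e₂₂
      rcases h a₂ b₁ e₂₁ with hcol | hrow
      · exact ha (hcol a₁ e₁₁)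
      · exact hb (hrow b₂ e₂₂).symm
    exact ⟨fun ⟨_, _, _, _, ha, hb, e₁₁, e₂₁, e₂₂, _⟩ ↦ hcell ha hb e₁₁ e₂₁ e₂₂,
      fun ⟨_, _, _, _, ha, hb, e₁₁, e₂₁, e₂₂, _⟩ ↦ hcell ha hb e₁₁ e₂₁ e₂₂⟩
  · rintro ⟨hP4, hC4⟩ a b hab
    by_contra! h
    obtain ⟨⟨a', ha', hane⟩, ⟨b', hb', hbne⟩⟩ := h
    by_cases hx : G.Adj (Sum.inl a') (Sum.inr b')
    · exact hC4 ⟨a', a, b, b', hane, Ne.symm hbne, ha', hab, hb', hx⟩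
    · exact hP4 ⟨a', a, b, b', hane, Ne.symm hbne, ha', hab, hb', hx⟩

def levelInter (G : SimpleGraph (A ⊕ B)) (c : ℕ) : Set B :=
  ⋂ a ∈ {a : A | (row G a).ncard = c}, row G a

lemma levelInter_subset_row {a : A} {c : ℕ} (ha : (row G a).ncard = c) :
    levelInter G c ⊆ row G a :=
  Set.biInter_subset_of_mem ha

lemma ncard_row_eq_of_not_subset (h : ∀ a a' : A, (row G a).ncard < (row G a').ncard →
      row G a ⊂ row G a')
    {a a' : A} {b b' : B} (hb : b ∈ row G a \ row G a') (hb' : b' ∈ row G a' \ row G a) :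
    (row G a).ncard = (row G a').ncard := by
  by_contra hne
  rcases lt_or_gt_of_ne hne with hlt | hlt
  · exact hb.2 ((h a a' hlt).subset hb.1)
  · exact hb'.2 ((h a' a hlt).subset hb'.1)

section Finite

variable [Finite B]

lemma NearlyRowNested.false_of_two_mem_sdiff_levelInter (hG : NearlyRowNested G) {a : A}
    {x y : B} (hx : x ∈ row G a \ levelInter G (row G a).ncard)
    (hy : y ∈ row G a \ levelInter G (row G a).ncard) (hxy : x ≠ y) : False := by
  have := Set.ncard_add_two_le_of_mem_sdiff (levelInter_subset_row rfl) hx hy hxy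
  rcases hG.2 _ ⟨a, rfl⟩ with h | h <;> simp only [levelInter] at this <;> omega

lemma NearlyRowNested.not_hasInducedSixCycle (hG : NearlyRowNested G) :
    ¬ HasInducedSixCycle G := by
  rintro ⟨a₁, a₂, a₃, b₁, b₂, b₃, -, -, -, -, hb₁₃, -, e₁₁, e₁₃, e₂₁, e₂₂, e₃₂, e₃₃, n₁₂, n₂₃, n₃₁⟩
  have h₁₂ := ncard_row_eq_of_not_subset hG.1 (b := b₃) ⟨e₁₃, n₂₃⟩ ⟨e₂₂, n₁₂⟩
  have h₂₃ := ncard_row_eq_of_not_subset hG.1 (b := b₁) ⟨e₂₁, n₃₁⟩ ⟨e₃₃, n₂₃⟩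
  exact hG.false_of_two_mem_sdiff_levelInter
    ⟨e₁₁, fun h ↦ n₃₁ (levelInter_subset_row (h₁₂.trans h₂₃).symm h)⟩
    ⟨e₁₃, fun h ↦ n₂₃ (levelInter_subset_row h₁₂.symm h)⟩ hb₁₃

lemma NearlyRowNested.not_hasEdgePlusCherryY (hG : NearlyRowNested G) :
    ¬ HasEdgePlusCherryY G := by
  rintro ⟨a₁, a₂, b₁, b₂, b₃, -, -, -, hb₂₃, e₁₁, e₂₂, e₂₃, n₁₂, n₁₃, n₂₁⟩
  have h₁₂ := ncard_row_eq_of_not_subset hG.1 ⟨e₁₁, n₂₁⟩ ⟨e₂₂, n₁₂⟩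
  exact hG.false_of_two_mem_sdiff_levelInter
    ⟨e₂₂, fun h ↦ n₁₂ (levelInter_subset_row h₁₂ h)⟩
    ⟨e₂₃, fun h ↦ n₁₃ (levelInter_subset_row h₁₂ h)⟩ hb₂₃

lemma ncard_row_sdiff_le_one (hEPC : ¬ HasEdgePlusCherryY G) {a a' : A} {b₁ : B}
    (hb₁ : b₁ ∈ row G a \ row G a') : (row G a' \ row G a).ncard ≤ 1 := by
  by_contra! h
  obtain ⟨b₂, b₃, hb₂, hb₃, hne⟩ := (Set.one_lt_ncard_iff).mp h
  exact hEPC ⟨a, a', b₁, b₂, b₃, by rintro rfl; exact hb₁.2 hb₁.1,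
    by rintro rfl; exact hb₂.2 hb₁.1, by rintro rfl; exact hb₃.2 hb₁.1,
    hne, hb₁.1, hb₂.1, hb₃.1, hb₂.2, hb₃.2, hb₁.2⟩

lemma ncard_row_sdiff_le_one_of_ncard_eq (hEPC : ¬ HasEdgePlusCherryY G) {a a' : A}
    (h : (row G a).ncard = (row G a').ncard) : (row G a \ row G a').ncard ≤ 1 := by
  by_cases hsub : row G a' ⊆ row G a
  · rw [Set.eq_of_subset_of_ncard_le hsub h.le, Set.sdiff_self, Set.ncard_empty]
    exact zero_le_one
  · obtain ⟨b, hb⟩ := Set.not_subset.mp hsub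
    exact ncard_row_sdiff_le_one hEPC hb

lemma row_ssubset_of_ncard_lt (hEPC : ¬ HasEdgePlusCherryY G) {a a' : A}
    (hlt : (row G a).ncard < (row G a').ncard) : row G a ⊂ row G a' := by
  by_cases hsub : row G a ⊆ row G a'
  · exact hsub.ssubset_of_ne fun h ↦ hlt.ne (congrArg Set.ncard h)
  obtain ⟨b, hb⟩ := Set.not_subset.mp hsub
  have hle := ncard_row_sdiff_le_one hEPC hb
  have hpos : 0 < (row G a \ row G a').ncard := (Set.ncard_pos).2 ⟨b, hb⟩
  have := Set.ncard_inter_add_ncard_sdiff_eq_ncard (row G a) (row G a')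
  have := Set.ncard_inter_add_ncard_sdiff_eq_ncard (row G a') (row G a)
  rw [Set.inter_comm] at this
  omega

lemma hasInducedSixCycle_of_rows (hEPC : ¬ HasEdgePlusCherryY G) {a₁ a₂ a₃ : A} {b₁ : B}
    (h₁₂ : (row G a₁).ncard = (row G a₂).ncard) (h₁₃ : (row G a₁).ncard = (row G a₃).ncard)
    (hne : row G a₁ ≠ row G a₂) (hb₁ : b₁ ∈ row G a₁ ∩ row G a₂) (hb₁₃ : b₁ ∉ row G a₃) :
    HasInducedSixCycle G := by
  obtain ⟨b₃, hb₃⟩ : (row G a₁ \ row G a₂).Nonempty :=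
    Set.sdiff_nonempty.2 fun h ↦ hne (Set.eq_of_subset_of_ncard_le h h₁₂.ge)
  obtain ⟨b₂, hb₂⟩ : (row G a₂ \ row G a₁).Nonempty :=
    Set.sdiff_nonempty.2 fun h ↦ hne (Set.eq_of_subset_of_ncard_le h h₁₂.le).symm
  have e₃₃ : b₃ ∈ row G a₃ := Set.mem_of_ncard_sdiff_le_one
    (ncard_row_sdiff_le_one_of_ncard_eq hEPC h₁₃) ⟨hb₁.1, hb₁₃⟩ hb₃.1
    (by rintro rfl; exact hb₃.2 hb₁.2)
  have e₃₂ : b₂ ∈ row G a₃ := Set.mem_of_ncard_sdiff_le_one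
    (ncard_row_sdiff_le_one_of_ncard_eq hEPC (h₁₂.symm.trans h₁₃)) ⟨hb₁.2, hb₁₃⟩ hb₂.1
    (by rintro rfl; exact hb₂.2 hb₁.1)
  exact ⟨a₁, a₂, a₃, b₁, b₂, b₃, by rintro rfl; exact hne rfl,
    by rintro rfl; exact hb₁₃ hb₁.1, by rintro rfl; exact hb₁₃ hb₁.2,
    by rintro rfl; exact hb₂.2 hb₁.1, by rintro rfl; exact hb₃.2 hb₁.2,
    by rintro rfl; exact hb₃.2 hb₂.1,
    hb₁.1, hb₃.1, hb₁.2, hb₂.1, e₃₂, e₃₃, hb₂.2, hb₃.2, hb₁₃⟩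

lemma ncard_levelInter (hC6 : ¬ HasInducedSixCycle G) (hEPC : ¬ HasEdgePlusCherryY G)
    {a₀ : A} : (levelInter G (row G a₀).ncard).ncard = (row G a₀).ncard - 1 ∨
      (levelInter G (row G a₀).ncard).ncard = (row G a₀).ncard := by
  set c := (row G a₀).ncard with hc
  have hIc : (levelInter G c).ncard ≤ c :=
    hc ▸ Set.ncard_le_ncard (levelInter_subset_row hc.symm)
  by_contra! hI
  obtain ⟨a₁, a₂, h₁, h₂, hne⟩ : ∃ a₁ a₂ : A, (row G a₁).ncard = c ∧ (row G a₂).ncard = c ∧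
      row G a₁ ≠ row G a₂ := by
    by_contra! h
    have : row G a₀ ⊆ levelInter G c :=
      Set.subset_iInter₂ fun a ha ↦ (h a₀ a hc.symm ha).subset
    have := Set.ncard_le_ncard this
    omega
  have hI₁₂ : levelInter G c ⊆ row G a₁ ∩ row G a₂ :=
    Set.subset_inter (levelInter_subset_row h₁) (levelInter_subset_row h₂)
  have hlt : (levelInter G c).ncard < (row G a₁ ∩ row G a₂).ncard := by
    have := ncard_row_sdiff_le_one_of_ncard_eq hEPC (h₁.trans h₂.symm)
    have := Set.ncard_inter_add_ncard_sdiff_eq_ncard (row G a₁) (row G a₂)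
    omega
  obtain ⟨b₁, hb₁, hb₁I⟩ := Set.exists_mem_notMem_of_ncard_lt_ncard hlt
  obtain ⟨a₃, h₃, hb₁₃⟩ : ∃ a₃ : A, (row G a₃).ncard = c ∧ b₁ ∉ row G a₃ := by
    simpa [levelInter] using hb₁I
  exact hC6 (hasInducedSixCycle_of_rows hEPC (h₁.trans h₂.symm) (h₁.trans h₃.symm) hne hb₁ hb₁₃)

lemma nearlyRowNested_iff :
    NearlyRowNested G ↔ ¬ HasInducedSixCycle G ∧ ¬ HasEdgePlusCherryY G := by
  refine ⟨fun hG ↦ ⟨hG.not_hasInducedSixCycle, hG.not_hasEdgePlusCherryY⟩, ?_⟩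
  rintro ⟨hC6, hEPC⟩
  refine ⟨fun a a' ↦ row_ssubset_of_ncard_lt hEPC, ?_⟩
  rintro c ⟨a₀, rfl⟩
  exact ncard_levelInter hC6 hEPC

end Finite

theorem forbidden_subgraph_characterizations_general [Fintype B]
    (G : SimpleGraph (A ⊕ B)) :
    (RowNested G ↔ ¬ HasTwoDisjointEdges G) ∧
    (NearlyRowNested G ↔ (¬ HasInducedSixCycle G ∧ ¬ HasEdgePlusCherryY G)) ∧
    (Horizontal G ↔ ¬ HasCherryX G) ∧
    (HorizontalVertical G ↔ (¬ HasInducedP4 G ∧ ¬ HasFourCycle G)) :=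
  ⟨rowNested_iff_not_hasTwoDisjointEdges, nearlyRowNested_iff, horizontal_iff_not_hasCherryX,
    horizontalVertical_iff⟩

/-- **Statement 17.**  Forbidden-induced-subgraph characterizations of the row-nested,
nearly row-nested, horizontal, and horizontal-vertical bipartite graphs. -/
theorem forbidden_subgraph_characterizations [Fintype A] [Fintype B]
    (G : SimpleGraph (A ⊕ B)) (hbip : IsBip G) :
    (RowNested G ↔ ¬ HasTwoDisjointEdges G) ∧
    (NearlyRowNested G ↔ (¬ HasInducedSixCycle G ∧ ¬ HasEdgePlusCherryY G)) ∧
    (Horizontal G ↔ ¬ HasCherryX G) ∧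
    (HorizontalVertical G ↔ (¬ HasInducedP4 G ∧ ¬ HasFourCycle G)) :=
  forbidden_subgraph_characterizations_general G

end BipartiteGraphs
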